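/- arXiv:1806.09071 — 2 statements merged into one kernel-verified Lean document; each statement's English description precedes it below -/
import Mathlib

section
/- Let φ : ℝ → ℝ be of the form φ(p) = max_{x ∈ X} F(x,p), where X ⊆ ℝⁿ is compact, F is continuous, p ↦ F(x,p) is convex and differentiable for each x, and for each p the maximum is attained at a unique point x(p). Then φ is differentiable and φ'(p) = ∂F/∂p evaluated at (x(p), p). -/
open Filter Topology Set


private lemma deriv_le_slope' {f : ℝ → ℝ} {f' a r : ℝ} (hf : ConvexOn ℝ Set.univ f)
    (hd : HasDerivAt f f' a) (h : a < r) : f' ≤ (f r - f a) / (r - a) := by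
  have ht : Tendsto (slope f a) (𝓝[>] a) (𝓝 f') :=
    (hasDerivAt_iff_tendsto_slope.mp hd).mono_left
      (nhdsWithin_mono a (fun x hx => ne_of_gt hx))
  apply le_of_tendsto ht
  filter_upwards [Ioo_mem_nhdsGT_of_mem ⟨le_refl a, h⟩] with s hs
  rw [slope_def_field]
  exact hf.secant_mono trivial trivial trivial (ne_of_gt hs.1) (ne_of_gt h) hs.2.le

private lemma slope_le_deriv' {f : ℝ → ℝ} {f' a r : ℝ} (hf : ConvexOn ℝ Set.univ f)
    (hd : HasDerivAt f f' a) (h : r < a) : (f r - f a) / (r - a) ≤ f' := by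
  have ht : Tendsto (slope f a) (𝓝[<] a) (𝓝 f') :=
    (hasDerivAt_iff_tendsto_slope.mp hd).mono_left
      (nhdsWithin_mono a (fun x hx => ne_of_lt hx))
  apply ge_of_tendsto ht
  filter_upwards [Ioo_mem_nhdsLT_of_mem ⟨h, le_refl a⟩] with s hs
  rw [slope_def_field]
  exact hf.secant_mono trivial trivial trivial (ne_of_lt h) (ne_of_lt hs.2) hs.1.le

private lemma subgrad' {f : ℝ → ℝ} {f' a : ℝ} (hf : ConvexOn ℝ Set.univ f)
    (hd : HasDerivAt f f' a) (r : ℝ) : f a + f' * (r - a) ≤ f r := by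
  rcases lt_trichotomy r a with hr | rfl | hr
  · have := slope_le_deriv' hf hd hr
    rw [div_le_iff_of_neg (by linarith)] at this
    linarith
  · simp
  · have := deriv_le_slope' hf hd hr
    rw [le_div_iff₀ (by linarith)] at this
    linarith


/-- Demyanov–Danskin theorem in one dual variable: if `φ(p) = max_{x ∈ X} F(x,p)` with `X`
compact, `F` continuous, convex and differentiable in `p`, and the maximizer `x(p)` unique,
then `φ` is differentiable with `φ'(p) = ∂F/∂p (x(p), p)`. -/
theorem danskin (n : ℕ) (X : Set (EuclideanSpace ℝ (Fin n))) (hXne : X.Nonempty)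
    (hXc : IsCompact X)
    (F Fp : EuclideanSpace ℝ (Fin n) → ℝ → ℝ)
    (hFcont : Continuous (fun q : EuclideanSpace ℝ (Fin n) × ℝ => F q.1 q.2))
    (hFconv : ∀ x, ConvexOn ℝ Set.univ (F x))
    (hFd : ∀ x p, HasDerivAt (fun s => F x s) (Fp x p) p)
    (xp : ℝ → EuclideanSpace ℝ (Fin n)) (φ : ℝ → ℝ)
    (hxp : ∀ p, xp p ∈ X ∧ IsMaxOn (fun x => F x p) X (xp p))
    (huniq : ∀ p y, y ∈ X → IsMaxOn (fun x => F x p) X y → y = xp p)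
    (hφ : ∀ p, φ p = F (xp p) p) :
    ∀ p, HasDerivAt φ (Fp (xp p) p) p := by
  intro p
  set g : ℝ := Fp (xp p) p with hg
  -- continuity of the argmax at p
  have hxpc : Tendsto xp (𝓝 p) (𝓝 (xp p)) := by
    apply tendsto_of_subseq_tendsto
    intro ns hns
    obtain ⟨a, haX, ms, hms, hcv⟩ := hXc.tendsto_subseq (x := fun n => xp (ns n))
      (fun n => (hxp (ns n)).1)
    have hqs : Tendsto (fun k => ns (ms k)) atTop (𝓝 p) := hns.comp hms.tendsto_atTop
    have hpair : Tendsto (fun k => (xp (ns (ms k)), ns (ms k))) atTop (𝓝 (a, p)) :=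
      hcv.prodMk_nhds hqs
    have h1 : Tendsto (fun k => F (xp (ns (ms k))) (ns (ms k))) atTop (𝓝 (F a p)) :=
      (hFcont.continuousAt (x := (a, p))).tendsto.comp hpair
    have ha : IsMaxOn (fun x => F x p) X a := by
      intro y hy
      have h2 : Tendsto (fun k => F y (ns (ms k))) atTop (𝓝 (F y p)) :=
        (hFcont.continuousAt (x := (y, p))).tendsto.comp
          ((tendsto_const_nhds (x := y)).prodMk_nhds hqs)
      exact le_of_tendsto_of_tendsto h2 h1
        (Eventually.of_forall fun k => (hxp (ns (ms k))).2 hy)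
    exact ⟨ms, (huniq p a haX ha) ▸ hcv⟩
  -- subgradient inequality for φ
  have hsub : ∀ q, φ p + g * (q - p) ≤ φ q := by
    intro q
    have h1 : F (xp p) p + g * (q - p) ≤ F (xp p) q := subgrad' (hFconv (xp p)) (hFd (xp p) p) q
    have h2 : F (xp p) q ≤ F (xp q) q := (hxp q).2 (hxp p).1
    rw [hφ p, hφ q]; linarith
  -- key upper bound: φ q - φ p ≤ F (xp q) q - F (xp q) p
  have hup : ∀ q, φ q - φ p ≤ F (xp q) q - F (xp q) p := by
    intro q
    have h2 : F (xp q) p ≤ F (xp p) p := (hxp p).2 (hxp q).1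
    rw [hφ p, hφ q]; linarith
  rw [hasDerivAt_iff_tendsto_slope, ← nhdsLT_sup_nhdsGT, tendsto_sup]
  have hslope : Tendsto (slope (F (xp p)) p) (𝓝[≠] p) (𝓝 g) :=
    hasDerivAt_iff_tendsto_slope.mp (hFd (xp p) p)
  constructor
  · -- left side
    rw [tendsto_order]
    constructor
    · intro c hc
      -- choose T < p with slope (F (xp p)) p T > (c+g)/2
      have hsl : Tendsto (slope (F (xp p)) p) (𝓝[<] p) (𝓝 g) :=
        hslope.mono_left (nhdsWithin_mono p (fun x hx => ne_of_lt hx))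
      obtain ⟨T, hT2, hT1⟩ : ∃ T, slope (F (xp p)) p T > (c + g)/2 ∧ T < p := by
        have := (hsl.eventually_const_lt (by linarith : (c + g)/2 < g)).and
          self_mem_nhdsWithin
        exact this.exists
      have hcont : Tendsto (fun q => (F (xp q) T - F (xp q) p) / (T - p)) (𝓝 p)
          (𝓝 ((F (xp p) T - F (xp p) p) / (T - p))) := by
        apply Tendsto.div_const
        apply Tendsto.sub
        · exact (hFcont.continuousAt (x := (xp p, T))).tendsto.comp
            (hxpc.prodMk_nhds tendsto_const_nhds)
        · exact (hFcont.continuousAt (x := (xp p, p))).tendsto.comp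
            (hxpc.prodMk_nhds tendsto_const_nhds)
      have hev : ∀ᶠ q in 𝓝 p, c < (F (xp q) T - F (xp q) p) / (T - p) := by
        apply hcont.eventually_const_lt
        rw [slope_def_field] at hT2; linarith
      filter_upwards [nhdsWithin_le_nhds hev,
        Ioo_mem_nhdsLT_of_mem ⟨hT1, le_refl p⟩] with q hq hq2
      have hq3 : q - p < 0 := by linarith [hq2.2]
      have hA : slope (F (xp q)) p q ≤ slope φ p q := by
        rw [slope_def_field, slope_def_field]
        apply div_le_div_of_nonpos_of_le (by linarith)
        linarith [hup q]
      have hB : slope (F (xp q)) p T ≤ slope (F (xp q)) p q := by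
        rw [slope_def_field, slope_def_field]
        exact (hFconv (xp q)).secant_mono trivial trivial trivial (ne_of_lt hT1)
          (ne_of_lt hq2.2) hq2.1.le
      calc c < (F (xp q) T - F (xp q) p) / (T - p) := hq
        _ = slope (F (xp q)) p T := (slope_def_field _ _ _).symm
        _ ≤ slope φ p q := le_trans hB hA
    · intro b hb
      filter_upwards [self_mem_nhdsWithin] with q (hq : q < p)
      have := hsub q
      have : slope φ p q ≤ g := by
        rw [slope_def_field, div_le_iff_of_neg (by linarith)]
        linarith
      linarith
  · -- right side
    rw [tendsto_order]
    constructor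
    · intro c hc
      filter_upwards [self_mem_nhdsWithin] with q (hq : p < q)
      have := hsub q
      have : g ≤ slope φ p q := by
        rw [slope_def_field, le_div_iff₀ (by linarith)]
        linarith
      linarith
    · intro b hb
      have hsr : Tendsto (slope (F (xp p)) p) (𝓝[>] p) (𝓝 g) :=
        hslope.mono_left (nhdsWithin_mono p (fun x hx => ne_of_gt hx))
      obtain ⟨T, hT2, hT1⟩ : ∃ T, slope (F (xp p)) p T < (g + b)/2 ∧ p < T := by
        have := (hsr.eventually_lt_const (by linarith : g < (g + b)/2)).and
          self_mem_nhdsWithin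
        exact this.exists
      have hcont : Tendsto (fun q => (F (xp q) T - F (xp q) p) / (T - p)) (𝓝 p)
          (𝓝 ((F (xp p) T - F (xp p) p) / (T - p))) := by
        apply Tendsto.div_const
        apply Tendsto.sub
        · exact (hFcont.continuousAt (x := (xp p, T))).tendsto.comp
            (hxpc.prodMk_nhds tendsto_const_nhds)
        · exact (hFcont.continuousAt (x := (xp p, p))).tendsto.comp
            (hxpc.prodMk_nhds tendsto_const_nhds)
      have hev : ∀ᶠ q in 𝓝 p, (F (xp q) T - F (xp q) p) / (T - p) < b := by
        apply hcont.eventually_lt_const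
        rw [slope_def_field] at hT2; linarith
      filter_upwards [nhdsWithin_le_nhds hev,
        Ioo_mem_nhdsGT_of_mem ⟨le_refl p, hT1⟩] with q hq hq2
      have hA : slope φ p q ≤ slope (F (xp q)) p q := by
        rw [slope_def_field, slope_def_field]
        exact (div_le_div_iff_of_pos_right (by linarith [hq2.1])).mpr (by linarith [hup q])
      have hB : slope (F (xp q)) p q ≤ slope (F (xp q)) p T := by
        rw [slope_def_field, slope_def_field]
        exact (hFconv (xp q)).secant_mono trivial trivial trivial (ne_of_gt hq2.1)
          (ne_of_gt hT1) hq2.2.le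
      calc slope φ p q ≤ slope (F (xp q)) p T := le_trans hA hB
        _ = (F (xp q) T - F (xp q) p) / (T - p) := slope_def_field _ _ _
        _ < b := hq
end

section
/- Decentralized dual reformulation: for continuous μ-strongly convex increasing f_k and C > 0, min { ∑_k f_k(x_k) : x_k ≥ y_k ≥ 0, ∑_k y_k ≥ C } = − min_{p₁,…,p_n ≥ 0} ( ∑_{k=1}^n max_{x_k ≥ 0}( p_k x_k − f_k(x_k) ) − C · min_{k=1,…,n} p_k ). -/
/-!
Let `V c` be the least cost of producing at least `c` in total with `x ≥ 0` (purchases `y ≤ x`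
can be taken equal to `x`). `V` is convex because the `f k` are, and nondecreasing, so its right
derivative `q` at `C` is a nonnegative subgradient. Weak duality: at prices `p ≥ 0` each producer
earns at least its profit at the price `min p`, so `-∑ f k (x k)` is below the dual objective for
every feasible `x`. At the uniform price `q` the subgradient inequality
`V C + q (∑ x - C) ≤ V (∑ x) ≤ ∑ f k (x k)` bounds the total profit by `q C - V C`, so the dual
objective there is at most `-V C`.
-/

open Set Finset

lemma ConvexOn.add_rightDeriv_mul_sub_le {S : Set ℝ} {f : ℝ → ℝ} {x y : ℝ}
    (hf : ConvexOn ℝ S f) (hx : x ∈ interior S) (hy : y ∈ S) :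
    f x + derivWithin f (Ioi x) x * (y - x) ≤ f y := by
  rcases lt_trichotomy y x with hyx | rfl | hxy
  · have hslope : slope f y x ≤ derivWithin f (Ioi x) x :=
      (hf.slope_le_leftDeriv_of_mem_interior hy hx hyx).trans
        (hf.leftDeriv_le_rightDeriv_of_mem_interior hx)
    rw [slope_def_field, div_le_iff₀ (sub_pos.2 hyx)] at hslope
    linarith
  · simp
  · have hslope : derivWithin f (Ioi x) x ≤ slope f x y :=
      hf.rightDeriv_le_slope_of_mem_interior hx hy hxy
    rw [slope_def_field, le_div_iff₀ (sub_pos.2 hxy)] at hslope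
    linarith

lemma StrongConvexOn.add_mul_sq_le_of_monotoneOn {s : Set ℝ} {g : ℝ → ℝ} {μ a x : ℝ}
    (hg : StrongConvexOn s μ g) (hmono : MonotoneOn g s) (ha : a ∈ s) (hx : x ∈ s) (hax : a ≤ x) :
    g a + μ / 4 * (x - a) ^ 2 ≤ g x := by
  have hmid := hg.2 hx ha (by norm_num : (0 : ℝ) ≤ 1 / 2) (by norm_num : (0 : ℝ) ≤ 1 / 2)
    (by norm_num)
  have hmid_mem : (1 / 2 : ℝ) • x + (1 / 2 : ℝ) • a ∈ s :=
    hg.1 hx ha (by norm_num) (by norm_num) (by norm_num)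
  have hle : g a ≤ g ((1 / 2 : ℝ) • x + (1 / 2 : ℝ) • a) :=
    hmono ha hmid_mem (by simp only [smul_eq_mul]; linarith)
  simp only [Real.norm_eq_abs, sq_abs, smul_eq_mul] at hmid hle
  nlinarith

lemma Real.sum_csSup_le {ι : Type*} [Fintype ι] {s : ι → Set ℝ} (hne : ∀ k, (s k).Nonempty)
    {B : ℝ} (h : ∀ x : ι → ℝ, (∀ k, x k ∈ s k) → ∑ k, x k ≤ B) :
    ∑ k, sSup (s k) ≤ B := by
  refine le_of_forall_pos_le_add fun ε hε => ?_
  set δ := ε / (Fintype.card ι + 1)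
  have hδ : 0 < δ := by positivity
  choose x hx hlt using fun k => exists_lt_of_lt_csSup (hne k) (sub_lt_self (sSup (s k)) hδ)
  have hcard : Fintype.card ι * δ ≤ ε := by
    rw [← mul_div_assoc, div_le_iff₀ (by positivity)]
    nlinarith
  calc ∑ k, sSup (s k) ≤ ∑ k, (x k + δ) := sum_le_sum fun k _ => by linarith [hlt k]
    _ = ∑ k, x k + Fintype.card ι * δ := by
      rw [sum_add_distrib, sum_const, card_univ, nsmul_eq_mul]
    _ ≤ B + ε := add_le_add (h x hx) hcard

noncomputable section Production

variable {ι : Type*} [Fintype ι]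

def planCosts (f : ι → ℝ → ℝ) (c : ℝ) : Set ℝ :=
  (fun x => ∑ k, f k (x k)) '' {x : ι → ℝ | 0 ≤ x ∧ c ≤ ∑ k, x k}

def minCost (f : ι → ℝ → ℝ) (c : ℝ) : ℝ :=
  sInf (planCosts f c)

def maxProfit (g : ℝ → ℝ) (p : ℝ) : ℝ :=
  sSup ((fun x => p * x - g x) '' Ici 0)

def dualObjective [Nonempty ι] (f : ι → ℝ → ℝ) (c : ℝ) (p : ι → ℝ) : ℝ :=
  ∑ k, maxProfit (f k) (p k) - c * univ.inf' univ_nonempty p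

lemma setOf_purchase_eq_planCosts (f : ι → ℝ → ℝ) (c : ℝ) :
    {w | ∃ x y : ι → ℝ, (∀ k, 0 ≤ y k) ∧ (∀ k, y k ≤ x k) ∧ c ≤ ∑ k, y k ∧
      w = ∑ k, f k (x k)} = planCosts f c := by
  ext w
  constructor
  · rintro ⟨x, y, hy, hyx, hc, rfl⟩
    exact ⟨x, ⟨fun k => (hy k).trans (hyx k), hc.trans (sum_le_sum fun k _ => hyx k)⟩, rfl⟩
  · rintro ⟨x, ⟨hx, hc⟩, rfl⟩
    exact ⟨x, x, hx, fun _ => le_rfl, hc, rfl⟩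

lemma planCosts_nonempty [Nonempty ι] (f : ι → ℝ → ℝ) (c : ℝ) : (planCosts f c).Nonempty := by
  refine ⟨_, fun _ => |c|, ⟨fun _ => abs_nonneg c, ?_⟩, rfl⟩
  rw [sum_const, card_univ, nsmul_eq_mul]
  exact (le_abs_self c).trans
    (le_mul_of_one_le_left (abs_nonneg c) (by exact_mod_cast Fintype.card_pos))

variable {f : ι → ℝ → ℝ}

lemma bddBelow_planCosts (hf : ∀ k, BddBelow (f k '' Ici 0)) (c : ℝ) :
    BddBelow (planCosts f c) := by
  choose b hb using hf
  refine ⟨∑ k, b k, ?_⟩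
  rintro _ ⟨x, ⟨hx, -⟩, rfl⟩
  exact sum_le_sum fun k _ => hb k ⟨x k, hx k, rfl⟩

lemma minCost_le (hf : ∀ k, BddBelow (f k '' Ici 0)) {c : ℝ} {x : ι → ℝ} (hx : 0 ≤ x)
    (hc : c ≤ ∑ k, x k) : minCost f c ≤ ∑ k, f k (x k) :=
  csInf_le (bddBelow_planCosts hf c) ⟨x, ⟨hx, hc⟩, rfl⟩

lemma monotone_minCost [Nonempty ι] (hf : ∀ k, BddBelow (f k '' Ici 0)) :
    Monotone (minCost f) := fun c₁ c₂ hc =>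
  csInf_le_csInf (bddBelow_planCosts hf c₁) (planCosts_nonempty f c₂)
    (Set.image_mono fun _ ⟨hx, hc₂⟩ => ⟨hx, hc.trans hc₂⟩)

lemma convexOn_minCost [Nonempty ι] (hconv : ∀ k, ConvexOn ℝ (Ici 0) (f k))
    (hf : ∀ k, BddBelow (f k '' Ici 0)) : ConvexOn ℝ univ (minCost f) := by
  refine ⟨convex_univ, fun c₁ _ c₂ _ a b ha hb hab => le_of_forall_pos_le_add fun ε hε => ?_⟩
  obtain ⟨_, ⟨x₁, ⟨hx₁, hc₁⟩, rfl⟩, hε₁⟩ := Real.lt_sInf_add_pos (planCosts_nonempty f c₁) hε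
  obtain ⟨_, ⟨x₂, ⟨hx₂, hc₂⟩, rfl⟩, hε₂⟩ := Real.lt_sInf_add_pos (planCosts_nonempty f c₂) hε
  have hsum : ∑ k, (a • x₁ + b • x₂) k = a * ∑ k, x₁ k + b * ∑ k, x₂ k := by
    simp [sum_add_distrib, mul_sum]
  calc minCost f (a • c₁ + b • c₂) ≤ ∑ k, f k ((a • x₁ + b • x₂) k) := by
        refine minCost_le hf (add_nonneg (smul_nonneg ha hx₁) (smul_nonneg hb hx₂)) ?_
        rw [hsum, smul_eq_mul, smul_eq_mul]
        gcongr
    _ ≤ ∑ k, (a * f k (x₁ k) + b * f k (x₂ k)) := sum_le_sum fun k _ =>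
        (hconv k).2 (hx₁ k) (hx₂ k) ha hb hab
    _ = a * ∑ k, f k (x₁ k) + b * ∑ k, f k (x₂ k) := by simp [sum_add_distrib, mul_sum]
    _ ≤ a * (minCost f c₁ + ε) + b * (minCost f c₂ + ε) := by
        gcongr
        exacts [hε₁.le, hε₂.le]
    _ = a • minCost f c₁ + b • minCost f c₂ + ε := by
        simp only [smul_eq_mul]; linear_combination ε * hab

lemma bddAbove_profits {g : ℝ → ℝ} {μ : ℝ} (hμ : 0 < μ) (hg : StrongConvexOn (Ici 0) μ g)
    (hmono : MonotoneOn g (Ici 0)) (p : ℝ) : BddAbove ((fun x => p * x - g x) '' Ici 0) := by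
  refine ⟨p ^ 2 / μ - g 0, ?_⟩
  rintro _ ⟨x, hx, rfl⟩
  have hgrowth := hg.add_mul_sq_le_of_monotoneOn hmono self_mem_Ici hx hx
  have hquad : p * x - μ / 4 * x ^ 2 ≤ p ^ 2 / μ := by
    rw [le_div_iff₀ hμ]
    nlinarith [sq_nonneg (μ * x - 2 * p)]
  simp only [sub_zero] at hgrowth
  linarith

lemma neg_minCost_le_dualObjective [Nonempty ι]
    (hprofit : ∀ k p, BddAbove ((fun x => p * x - f k x) '' Ici 0)) (c : ℝ) {p : ι → ℝ}
    (hp : 0 ≤ p) : -minCost f c ≤ dualObjective f c p := by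
  rw [neg_le, minCost]
  refine le_csInf (planCosts_nonempty f c) ?_
  rintro _ ⟨x, ⟨hx, hc⟩, rfl⟩
  set m := univ.inf' univ_nonempty p
  have hm : 0 ≤ m := le_inf' _ _ fun k _ => hp k
  have hprice : ∀ k, m * x k - f k (x k) ≤ maxProfit (f k) (p k) := fun k =>
    calc m * x k - f k (x k) ≤ p k * x k - f k (x k) := by
          gcongr
          · exact hx k
          · exact inf'_le _ (mem_univ k)
      _ ≤ maxProfit (f k) (p k) := le_csSup (hprofit k (p k)) ⟨x k, hx k, rfl⟩
  have hsum := Finset.sum_le_sum fun k (_ : k ∈ Finset.univ) => hprice k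
  rw [sum_sub_distrib, ← mul_sum] at hsum
  have : m * c ≤ m * ∑ k, x k := by gcongr
  rw [dualObjective]
  linarith

lemma dualObjective_const_le [Nonempty ι] (hf : ∀ k, BddBelow (f k '' Ici 0)) {c q : ℝ}
    (hq : ∀ c', minCost f c + q * (c' - c) ≤ minCost f c') :
    dualObjective f c (fun _ => q) ≤ -minCost f c := by
  rw [dualObjective, inf'_const, sub_le_iff_le_add]
  refine Real.sum_csSup_le (fun _ => Set.nonempty_Ici.image _) fun y hy => ?_
  choose x hx hxy using hy
  have hx0 : 0 ≤ x := fun k => hx k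
  calc ∑ k, y k = q * ∑ k, x k - ∑ k, f k (x k) := by
        rw [mul_sum, ← sum_sub_distrib]
        exact sum_congr rfl fun k _ => (hxy k).symm
    _ ≤ q * ∑ k, x k - minCost f (∑ k, x k) := by gcongr; exact minCost_le hf hx0 le_rfl
    _ ≤ -minCost f c + c * q := by linarith [hq (∑ k, x k)]

end Production

theorem decentralized_dual_general (n : ℕ) (hn : 0 < n) (μ C : ℝ) (hμ : 0 < μ)
    (f : Fin n → ℝ → ℝ)
    (hsc : ∀ k, StrongConvexOn (Set.Ici 0) μ (f k))
    (hmono : ∀ k, StrictMonoOn (f k) (Set.Ici 0)) :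
    sInf {w | ∃ x y : Fin n → ℝ, (∀ k, 0 ≤ y k) ∧ (∀ k, y k ≤ x k) ∧
        C ≤ (∑ k, y k) ∧ w = ∑ k, f k (x k)}
      = - sInf {w | ∃ p : Fin n → ℝ, (∀ k, 0 ≤ p k) ∧
          w = (∑ k, sSup ((fun x => p k * x - f k x) '' Set.Ici 0))
            - C * Finset.univ.inf'
                (Finset.univ_nonempty_iff.mpr (Fin.pos_iff_nonempty.mp hn)) p} := by
  have : Nonempty (Fin n) := ⟨⟨0, hn⟩⟩
  have hbdd k : BddBelow (f k '' Ici 0) :=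
    ⟨f k 0, forall_mem_image.2 fun _ hx => (hmono k).monotoneOn self_mem_Ici hx hx⟩
  have hprofit k := bddAbove_profits hμ (hsc k) (hmono k).monotoneOn
  have hconv : ConvexOn ℝ univ (minCost f) :=
    convexOn_minCost (fun k => ((hsc k).strictConvexOn hμ).convexOn) hbdd
  set q := derivWithin (minCost f) (Ioi C) C
  have hq (c' : ℝ) : minCost f C + q * (c' - C) ≤ minCost f c' :=
    hconv.add_rightDeriv_mul_sub_le (by simp) (mem_univ c')
  have hq0 : 0 ≤ q := ((monotone_minCost hbdd).monotoneOn _).derivWithin_nonneg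
  have hdual : IsLeast {w | ∃ p : Fin n → ℝ, (∀ k, 0 ≤ p k) ∧ w = dualObjective f C p}
      (-minCost f C) := by
    refine ⟨⟨fun _ => q, fun _ => hq0, ?_⟩, ?_⟩
    · exact le_antisymm (neg_minCost_le_dualObjective hprofit C fun _ => hq0)
        (dualObjective_const_le hbdd hq)
    · rintro _ ⟨p, hp, rfl⟩
      exact neg_minCost_le_dualObjective hprofit C hp
  rw [setOf_purchase_eq_planCosts]
  exact neg_eq_iff_eq_neg.mp hdual.csInf_eq.symm

/-- Decentralized dual reformulation: the optimal value of
`min {∑ fₖ(xₖ) : xₖ ≥ yₖ ≥ 0, ∑ yₖ ≥ C}` equals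
`− min_{p ≥ 0} ( ∑ₖ max_{x ≥ 0}(pₖ x − fₖ(x)) − C minₖ pₖ )`. -/
theorem decentralized_dual (n : ℕ) (hn : 0 < n) (μ C : ℝ) (hμ : 0 < μ) (hC : 0 < C)
    (f : Fin n → ℝ → ℝ)
    (hcont : ∀ k, ContinuousOn (f k) (Set.Ici 0))
    (hsc : ∀ k, StrongConvexOn (Set.Ici 0) μ (f k))
    (hmono : ∀ k, StrictMonoOn (f k) (Set.Ici 0)) :
    sInf {w | ∃ x y : Fin n → ℝ, (∀ k, 0 ≤ y k) ∧ (∀ k, y k ≤ x k) ∧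
        C ≤ (∑ k, y k) ∧ w = ∑ k, f k (x k)}
      = - sInf {w | ∃ p : Fin n → ℝ, (∀ k, 0 ≤ p k) ∧
          w = (∑ k, sSup ((fun x => p k * x - f k x) '' Set.Ici 0))
            - C * Finset.univ.inf'
                (Finset.univ_nonempty_iff.mpr (Fin.pos_iff_nonempty.mp hn)) p} :=
  decentralized_dual_general n hn μ C hμ f hsc hmono
end
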